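/- arXiv:2401.02592 — 3 statements merged into one kernel-verified Lean document; each statement's English description precedes it below -/
import Mathlib

section
/- Let A1, A2 be real r1×r2 matrices and B1, B2 be real r2×r3 matrices. With A = [A1; A2], B = [B1; B2], and A ⊗̄ B = [A1B1; A2B1; A1B2; A2B2], the spectral norms satisfy ‖A ⊗̄ B‖ ≤ ‖A‖ · ‖B‖. -/
/-! With `A = [A₁; A₂]` one has `A ⊗̄ B = [A B₁; A B₂]`, so for every `x`
`‖(A ⊗̄ B) x‖² = ‖A B₁ x‖² + ‖A B₂ x‖² ≤ ‖A‖² (‖B₁ x‖² + ‖B₂ x‖²) = ‖A‖² ‖B x‖² ≤ ‖A‖² ‖B‖² ‖x‖²`. -/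

open Matrix

/-- Spectral (operator) norm of a real matrix. -/
noncomputable def specNorm {m n : Type*} [Fintype m] [Fintype n] [DecidableEq n]
    (A : Matrix m n ℝ) : ℝ :=
  ‖LinearMap.toContinuousLinearMap (Matrix.toEuclideanLin A)‖

/-- The block Kronecker-type product A ⊗̄ B = [A1B1; A2B1; A1B2; A2B2]. -/
noncomputable def obar {r1 r2 r3 : ℕ}
    (A1 A2 : Matrix (Fin r1) (Fin r2) ℝ) (B1 B2 : Matrix (Fin r2) (Fin r3) ℝ) :
    Matrix ((Fin r1 ⊕ Fin r1) ⊕ (Fin r1 ⊕ Fin r1)) (Fin r3) ℝ :=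
  Matrix.fromRows (Matrix.fromRows (A1 * B1) (A2 * B1))
    (Matrix.fromRows (A1 * B2) (A2 * B2))

section

variable {m k n : Type*} [Fintype m] [Fintype k] [Fintype n] [DecidableEq k] [DecidableEq n]

lemma specNorm_nonneg (A : Matrix m n ℝ) : 0 ≤ specNorm A := norm_nonneg _

lemma norm_toEuclideanLin_le_specNorm_mul (A : Matrix m n ℝ) (x : EuclideanSpace ℝ n) :
    ‖toEuclideanLin A x‖ ≤ specNorm A * ‖x‖ :=
  (LinearMap.toContinuousLinearMap (toEuclideanLin A)).le_opNorm x

lemma norm_toEuclideanLin_fromRows_sq {m' : Type*} [Fintype m'] (A₁ : Matrix m n ℝ)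
    (A₂ : Matrix m' n ℝ) (x : EuclideanSpace ℝ n) :
    ‖toEuclideanLin (fromRows A₁ A₂) x‖ ^ 2 =
      ‖toEuclideanLin A₁ x‖ ^ 2 + ‖toEuclideanLin A₂ x‖ ^ 2 := by
  simp only [EuclideanSpace.norm_sq_eq, Fintype.sum_sum_type]
  rfl

lemma specNorm_fromRows_mul_le (A : Matrix m k ℝ) (B₁ B₂ : Matrix k n ℝ) :
    specNorm (fromRows (A * B₁) (A * B₂)) ≤ specNorm A * specNorm (fromRows B₁ B₂) := by
  have hAB := mul_nonneg (specNorm_nonneg A) (specNorm_nonneg (fromRows B₁ B₂))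
  refine ContinuousLinearMap.opNorm_le_bound _ hAB fun x => ?_
  have hA (y : EuclideanSpace ℝ k) : ‖toEuclideanLin A y‖ ^ 2 ≤ specNorm A ^ 2 * ‖y‖ ^ 2 := by
    rw [← mul_pow]
    exact pow_le_pow_left₀ (norm_nonneg _) (norm_toEuclideanLin_le_specNorm_mul A y) 2
  have hB := norm_toEuclideanLin_le_specNorm_mul (fromRows B₁ B₂) x
  refine le_of_pow_le_pow_left₀ two_ne_zero (mul_nonneg hAB (norm_nonneg x)) ?_
  calc ‖toEuclideanLin (fromRows (A * B₁) (A * B₂)) x‖ ^ 2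
      = ‖toEuclideanLin A (toEuclideanLin B₁ x)‖ ^ 2
          + ‖toEuclideanLin A (toEuclideanLin B₂ x)‖ ^ 2 := by
        simp only [norm_toEuclideanLin_fromRows_sq, toLpLin_mul_same, LinearMap.comp_apply]
    _ ≤ specNorm A ^ 2 * ‖toEuclideanLin (fromRows B₁ B₂) x‖ ^ 2 := by
        rw [norm_toEuclideanLin_fromRows_sq, mul_add]
        exact add_le_add (hA _) (hA _)
    _ ≤ specNorm A ^ 2 * (specNorm (fromRows B₁ B₂) * ‖x‖) ^ 2 := by gcongr
    _ = (specNorm A * specNorm (fromRows B₁ B₂) * ‖x‖) ^ 2 := by ring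

end

/-- ‖A ⊗̄ B‖ ≤ ‖A‖ ⬝ ‖B‖ (spectral norms). -/
theorem stmt_1 {r1 r2 r3 : ℕ}
    (A1 A2 : Matrix (Fin r1) (Fin r2) ℝ) (B1 B2 : Matrix (Fin r2) (Fin r3) ℝ) :
    specNorm (obar A1 A2 B1 B2) ≤
      specNorm (Matrix.fromRows A1 A2) * specNorm (Matrix.fromRows B1 B2) := by
  have hobar : obar A1 A2 B1 B2 = fromRows (fromRows A1 A2 * B1) (fromRows A1 A2 * B2) := by
    simp only [obar, fromRows_mul]
  rw [hobar]
  exact specNorm_fromRows_mul_le _ B1 B2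
end

section
/- For any real matrices A_i, A*_i ∈ R^{r_{i-1}×r_i}, i = 1, ..., N, the following second-order expansion identity holds: A*_1 ⋯ A*_N − A_1 ⋯ A_N + Σ_{i=1}^{N} A_1 ⋯ A_{i-1} (A_i − A*_i) A_{i+1} ⋯ A_N = Σ_{i=1}^{N-1} Σ_{j=i+1}^{N} A_1 ⋯ A_{i-1} (A_i − A*_i) A*_{i+1} ⋯ A*_{j-1} (A_j − A*_j) A_{j+1} ⋯ A_N. -/
/-
Telescoping gives the first-order expansion
`A_i ⋯ A_{k-1} − B_i ⋯ B_{k-1} = Σ_{i ≤ j < k} A_i ⋯ A_{j-1} (A_j − B_j) B_{j+1} ⋯ B_{k-1}`.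
Applied once from index `0` it turns the left-hand side into
`Σ_i A_1 ⋯ A_{i-1} (A_i − A*_i) (A_{i+1} ⋯ A_N − A*_{i+1} ⋯ A*_N)`, and applied again, with the
roles of `A` and `A*` exchanged, to each tail difference it produces the double sum.
-/

open Matrix

/-- Product of the chain of matrices `A i * A (i+1) * ⋯ * A (j-1)`, a matrix of size
`r i × r j`. For `i = j` it is the identity; for meaningless ranges (`i > j`) it is junk. -/
noncomputable def seg (r : ℕ → ℕ) (A : ∀ i, Matrix (Fin (r i)) (Fin (r (i + 1))) ℝ)
    (i : ℕ) : (j : ℕ) → Matrix (Fin (r i)) (Fin (r j)) ℝ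
  | 0 => if h : i = 0 then by subst h; exact 1 else 0
  | (j + 1) => if h : i = j + 1 then by subst h; exact 1 else seg r A i j * A j

open Finset

section Seg

variable (r : ℕ → ℕ)

lemma seg_self (A : ∀ i, Matrix (Fin (r i)) (Fin (r (i + 1))) ℝ) (i : ℕ) : seg r A i i = 1 := by
  cases i <;> simp [seg]

lemma seg_succ_of_le (A : ∀ i, Matrix (Fin (r i)) (Fin (r (i + 1))) ℝ) {i j : ℕ} (h : i ≤ j) :
    seg r A i (j + 1) = seg r A i j * A j := by
  simp [seg, show i ≠ j + 1 by omega]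

lemma seg_sub_seg (A B : ∀ i, Matrix (Fin (r i)) (Fin (r (i + 1))) ℝ) {i k : ℕ} (h : i ≤ k) :
    seg r A i k - seg r B i k =
      ∑ j ∈ Ico i k, seg r A i j * (A j - B j) * seg r B (j + 1) k := by
  induction k, h using Nat.le_induction with
  | base => simp [seg_self]
  | succ k hik ih =>
    have shift : ∑ j ∈ Ico i k, seg r A i j * (A j - B j) * seg r B (j + 1) (k + 1) =
        (∑ j ∈ Ico i k, seg r A i j * (A j - B j) * seg r B (j + 1) k) * B k := by
      rw [Matrix.sum_mul]
      refine sum_congr rfl fun j hj => ?_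
      simp only [seg_succ_of_le r B (mem_Ico.1 hj).2, Matrix.mul_assoc]
    rw [sum_Ico_succ_top hik, shift, ← ih, seg_succ_of_le r A hik, seg_succ_of_le r B hik,
      seg_self, Matrix.mul_one, Matrix.sub_mul, Matrix.mul_sub]
    abel

end Seg

/-- Second-order expansion identity:
`A*_1 ⋯ A*_N − A_1 ⋯ A_N + Σ_i A_1 ⋯ A_{i-1}(A_i − A*_i)A_{i+1} ⋯ A_N
  = Σ_{i<j} A_1 ⋯ A_{i-1}(A_i − A*_i)A*_{i+1} ⋯ A*_{j-1}(A_j − A*_j)A_{j+1} ⋯ A_N`. -/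
theorem stmt_5 (r : ℕ → ℕ) (A A' : ∀ i, Matrix (Fin (r i)) (Fin (r (i + 1))) ℝ) (N : ℕ) :
    seg r A' 0 N - seg r A 0 N +
        ∑ i ∈ Finset.range N, seg r A 0 i * (A i - A' i) * seg r A (i + 1) N =
      ∑ i ∈ Finset.range N, ∑ j ∈ Finset.Ico (i + 1) N,
        seg r A 0 i * (A i - A' i) * seg r A' (i + 1) j * (A j - A' j) *
          seg r A (j + 1) N := by
  have head : seg r A' 0 N - seg r A 0 N =
      -∑ i ∈ range N, seg r A 0 i * (A i - A' i) * seg r A' (i + 1) N := by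
    rw [range_eq_Ico, ← seg_sub_seg r A A' (Nat.zero_le N), neg_sub]
  have tail (i : ℕ) (hi : i ∈ range N) : seg r A (i + 1) N - seg r A' (i + 1) N =
      ∑ j ∈ Ico (i + 1) N, seg r A' (i + 1) j * (A j - A' j) * seg r A (j + 1) N := by
    rw [← neg_sub, seg_sub_seg r A' A (mem_range.1 hi), ← sum_neg_distrib]
    refine sum_congr rfl fun j _ => ?_
    rw [← Matrix.neg_mul, ← Matrix.mul_neg, neg_sub]
  rw [head, neg_add_eq_sub, ← sum_sub_distrib]
  refine sum_congr rfl fun i hi => ?_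
  rw [← Matrix.mul_sub, tail i hi, Matrix.mul_sum]
  simp only [Matrix.mul_assoc]
end

section
/- Let X ∈ St(n,r) (i.e., XᵀX = I_r), let ξ be in the tangent space of the Stiefel manifold at X (ξᵀX + Xᵀξ = 0), and set X⁺ = X + ξ. Then the polar-retraction point Retr_X(X⁺) = X⁺((X⁺)ᵀX⁺)^{-1/2} satisfies ‖Retr_X(X⁺) − X̄‖_F ≤ ‖X⁺ − X̄‖_F for every X̄ ∈ St(n,r). -/
/-!
Write `X⁺ = P S` with `S = ((X⁺)ᵀX⁺)^{1/2}` and `P = Retr_X(X⁺)`, so that `PᵀP = 1`. Tangency gives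
`(X⁺)ᵀX⁺ = 1 + ξᵀξ ≥ 1`, hence `T = S - 1 ⪰ 0`. Then
`‖PS - X̄‖² = ‖P - X̄‖² + 2⟪P - X̄, PT⟫ + ‖PT‖²` and `⟪P - X̄, PT⟫ = tr T - tr (X̄ᵀPT) ≥ 0`:
writing `T = CᵀC`, Cauchy–Schwarz gives `tr (X̄ᵀPT) = ⟪X̄Cᵀ, PCᵀ⟫ ≤ ‖X̄Cᵀ‖ ‖PCᵀ‖ = ‖Cᵀ‖² = tr T`,
because `X̄` and `P` are isometries.
-/

open Matrix

/-- Frobenius norm of a real matrix. -/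
noncomputable def frobNorm {m n : Type*} [Fintype m] [Fintype n]
    (A : Matrix m n ℝ) : ℝ :=
  Real.sqrt (∑ i, ∑ j, (A i j) ^ 2)

/-- The square root of a positive semidefinite matrix (Mathlib's former `Matrix.PosSemidef.sqrt`). -/
noncomputable def Matrix.PosSemidef.sqrt {n 𝕜 : Type*} [Fintype n] [DecidableEq n] [RCLike 𝕜]
    [PartialOrder 𝕜] {A : Matrix n n 𝕜} (hA : A.PosSemidef) : Matrix n n 𝕜 :=
  (hA.1.eigenvectorUnitary : Matrix n n 𝕜) * diagonal ((↑) ∘ (√·) ∘ hA.1.eigenvalues) *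
    (star hA.1.eigenvectorUnitary : Matrix n n 𝕜)

open scoped ComplexOrder MatrixOrder

namespace Matrix.PosSemidef

variable {n 𝕜 : Type*} [Fintype n] [DecidableEq n] [RCLike 𝕜] {A : Matrix n n 𝕜}

theorem sqrt_eq_cfc_sqrt (hA : A.PosSemidef) : hA.sqrt = CFC.sqrt A := by
  rw [CFC.sqrt_eq_real_sqrt A hA.nonneg, cfcₙ_eq_cfc, hA.1.cfc_eq]
  rfl

theorem sqrt_mul_sqrt_self (hA : A.PosSemidef) : hA.sqrt * hA.sqrt = A := by
  rw [hA.sqrt_eq_cfc_sqrt, CFC.sqrt_mul_sqrt_self A hA.nonneg]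

theorem one_le_sqrt (hA : A.PosSemidef) (h : 1 ≤ A) : 1 ≤ hA.sqrt := by
  rw [hA.sqrt_eq_cfc_sqrt, CFC.sqrt_eq_real_sqrt A hA.nonneg, cfcₙ_eq_cfc]
  exact one_le_cfc _ A fun x hx => Real.one_le_sqrt.mpr ((CFC.one_le_iff A hA.1).mp h x hx)

theorem posSemidef_sqrt (hA : A.PosSemidef) : hA.sqrt.PosSemidef :=
  hA.sqrt_eq_cfc_sqrt ▸ (CFC.sqrt_nonneg A).posSemidef

theorem isUnit_det_sqrt (hA : A.PosSemidef) (hU : IsUnit A) : IsUnit hA.sqrt.det :=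
  isUnit_of_mul_isUnit_left <| by
    rwa [← det_mul, hA.sqrt_mul_sqrt_self, ← isUnit_iff_isUnit_det]

end Matrix.PosSemidef

section Frobenius

variable {m n : Type*} [Fintype m] [Fintype n]

theorem frobNorm_eq_sqrt_trace (A : Matrix m n ℝ) : frobNorm A = √(Aᵀ * A).trace := by
  rw [frobNorm, ← vec_dotProduct_vec, dotProduct, ← Finset.univ_product_univ,
    Finset.sum_product_right]
  simp [vec, sq]

theorem frobNorm_le_frobNorm_iff {A B : Matrix m n ℝ} :
    frobNorm A ≤ frobNorm B ↔ (Aᵀ * A).trace ≤ (Bᵀ * B).trace := by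
  rw [frobNorm_eq_sqrt_trace, frobNorm_eq_sqrt_trace]
  exact Real.sqrt_le_sqrt_iff (by simpa using (posSemidef_conjTranspose_mul_self B).trace_nonneg)

theorem trace_transpose_mul_le_frobNorm_mul (A B : Matrix m n ℝ) :
    (Aᵀ * B).trace ≤ frobNorm A * frobNorm B := by
  rw [← vec_dotProduct_vec]
  convert Real.sum_mul_le_sqrt_mul_sqrt Finset.univ (vec A) (vec B) using 2 <;>
    simp [frobNorm, vec, dotProduct, Fintype.sum_prod_type_right]

theorem trace_transpose_mul_self_add (D E : Matrix m n ℝ) :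
    ((D + E)ᵀ * (D + E)).trace = (Dᵀ * D).trace + 2 * (Dᵀ * E).trace + (Eᵀ * E).trace := by
  have hED : (Eᵀ * D).trace = (Dᵀ * E).trace := by
    rw [← trace_transpose, transpose_mul, transpose_transpose]
  simp only [transpose_add, Matrix.add_mul, Matrix.mul_add, trace_add, hED]
  ring

end Frobenius

theorem transpose_mul_self_add_of_tangent {m n : Type*} [Fintype m] [DecidableEq n]
    {X ξ : Matrix m n ℝ} (hX : Xᵀ * X = 1) (hξ : ξᵀ * X + Xᵀ * ξ = 0) :
    (X + ξ)ᵀ * (X + ξ) = 1 + ξᵀ * ξ :=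
  calc (X + ξ)ᵀ * (X + ξ) = Xᵀ * X + ξᵀ * ξ + (ξᵀ * X + Xᵀ * ξ) := by
        simp only [transpose_add, Matrix.add_mul, Matrix.mul_add]; abel
    _ = 1 + ξᵀ * ξ := by rw [hX, hξ, add_zero]

section Stiefel

variable {m n : Type*} [Fintype m] [Fintype n] [DecidableEq n]

theorem frobNorm_mul_of_transpose_mul_self_eq_one {k : Type*} [Fintype k] {A : Matrix m n ℝ}
    (hA : Aᵀ * A = 1) (B : Matrix n k ℝ) : frobNorm (A * B) = frobNorm B := by
  rw [frobNorm_eq_sqrt_trace, frobNorm_eq_sqrt_trace, transpose_mul, Matrix.mul_assoc,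
    ← Matrix.mul_assoc Aᵀ, hA, Matrix.one_mul]

theorem trace_transpose_mul_mul_le_trace {A B : Matrix m n ℝ} (hA : Aᵀ * A = 1)
    (hB : Bᵀ * B = 1) {T : Matrix n n ℝ} (hT : T.PosSemidef) : (Aᵀ * B * T).trace ≤ T.trace := by
  obtain ⟨C, rfl⟩ := CStarAlgebra.nonneg_iff_eq_star_mul_self.mp hT.nonneg
  simp only [star_eq_conjTranspose, conjTranspose_eq_transpose_of_trivial]
  calc (Aᵀ * B * (Cᵀ * C)).trace = ((A * Cᵀ)ᵀ * (B * Cᵀ)).trace := by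
        rw [transpose_mul, transpose_transpose, ← Matrix.mul_assoc, trace_mul_comm]
        simp only [Matrix.mul_assoc]
    _ ≤ frobNorm (A * Cᵀ) * frobNorm (B * Cᵀ) := trace_transpose_mul_le_frobNorm_mul _ _
    _ = frobNorm Cᵀ ^ 2 := by
        rw [frobNorm_mul_of_transpose_mul_self_eq_one hA,
          frobNorm_mul_of_transpose_mul_self_eq_one hB, sq]
    _ = (Cᵀ * C).trace := by
        rw [frobNorm_eq_sqrt_trace, Real.sq_sqrt, transpose_transpose, trace_mul_comm]
        simpa using (posSemidef_conjTranspose_mul_self Cᵀ).trace_nonneg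

theorem frobNorm_sub_le_frobNorm_mul_sub {P Q : Matrix m n ℝ} (hP : Pᵀ * P = 1)
    (hQ : Qᵀ * Q = 1) {S : Matrix n n ℝ} (hS : 1 ≤ S) :
    frobNorm (P - Q) ≤ frobNorm (P * S - Q) := by
  set T := S - 1
  have hT : T.PosSemidef := Matrix.le_iff.mp hS
  have hcross : 0 ≤ ((P - Q)ᵀ * (P * T)).trace := by
    rw [transpose_sub, Matrix.sub_mul, ← Matrix.mul_assoc, ← Matrix.mul_assoc, hP,
      Matrix.one_mul, trace_sub, sub_nonneg]
    exact trace_transpose_mul_mul_le_trace hQ hP hT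
  have hPT : 0 ≤ ((P * T)ᵀ * (P * T)).trace := by
    simpa using (posSemidef_conjTranspose_mul_self (P * T)).trace_nonneg
  rw [frobNorm_le_frobNorm_iff,
    show P * S - Q = P - Q + P * T by simp only [T, Matrix.mul_sub, Matrix.mul_one]; abel,
    trace_transpose_mul_self_add]
  linarith

theorem transpose_mul_mul_inv_sqrt_eq_one {Y : Matrix m n ℝ} (hM : (Yᵀ * Y).PosSemidef)
    (hU : IsUnit (Yᵀ * Y)) :
    (Y * hM.sqrt⁻¹)ᵀ * (Y * hM.sqrt⁻¹) = 1 := by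
  set S := hM.sqrt
  have hSt : Sᵀ = S := (conjTranspose_eq_transpose_of_trivial S).symm.trans hM.posSemidef_sqrt.1
  have hSu : IsUnit S.det := hM.isUnit_det_sqrt hU
  calc (Y * S⁻¹)ᵀ * (Y * S⁻¹) = S⁻¹ * (Yᵀ * Y) * S⁻¹ := by
        rw [transpose_mul, transpose_nonsing_inv, hSt]
        simp only [Matrix.mul_assoc]
    _ = (S⁻¹ * S) * (S * S⁻¹) := by
        rw [← hM.sqrt_mul_sqrt_self]
        simp only [S, Matrix.mul_assoc]
    _ = 1 := by rw [nonsing_inv_mul _ hSu, mul_nonsing_inv _ hSu, Matrix.one_mul]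

end Stiefel

/-- Nonexpansiveness of the polar retraction: for `X ∈ St(n,r)`, `ξ` tangent at `X`,
`X⁺ = X + ξ`, and `Retr_X(X⁺) = X⁺((X⁺)ᵀX⁺)^{-1/2}`, we have
`‖Retr_X(X⁺) − X̄‖_F ≤ ‖X⁺ − X̄‖_F` for every `X̄ ∈ St(n,r)`. -/
theorem stmt_12 {n r : ℕ} (X ξ : Matrix (Fin n) (Fin r) ℝ)
    (hX : Xᵀ * X = (1 : Matrix (Fin r) (Fin r) ℝ))
    (hξ : ξᵀ * X + Xᵀ * ξ = 0)
    (hM : ((X + ξ)ᵀ * (X + ξ)).PosSemidef)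
    (Xbar : Matrix (Fin n) (Fin r) ℝ)
    (hXbar : Xbarᵀ * Xbar = (1 : Matrix (Fin r) (Fin r) ℝ)) :
    frobNorm ((X + ξ) * (hM.sqrt)⁻¹ - Xbar) ≤ frobNorm ((X + ξ) - Xbar) := by
  have hMeq := transpose_mul_self_add_of_tangent hX hξ
  have hξξ : (ξᵀ * ξ).PosSemidef := by simpa using posSemidef_conjTranspose_mul_self ξ
  have hU : IsUnit ((X + ξ)ᵀ * (X + ξ)) := hMeq ▸ (PosDef.one.add_posSemidef hξξ).isUnit
  have hS : 1 ≤ hM.sqrt := hM.one_le_sqrt (hMeq ▸ le_add_of_nonneg_right hξξ.nonneg)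
  calc frobNorm ((X + ξ) * hM.sqrt⁻¹ - Xbar)
      ≤ frobNorm ((X + ξ) * hM.sqrt⁻¹ * hM.sqrt - Xbar) :=
        frobNorm_sub_le_frobNorm_mul_sub (transpose_mul_mul_inv_sqrt_eq_one hM hU) hXbar hS
    _ = frobNorm ((X + ξ) - Xbar) := by
        rw [nonsing_inv_mul_cancel_right _ _ (hM.isUnit_det_sqrt hU)]
end
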